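/- Let σ and σ' be two states of a Kelvin–Planck theory (Σ,P). The following are equivalent: (i) σ and σ' are of the same hotness, i.e., both (0, δ_σ − δ_{σ'}) and (0, δ_{σ'} − δ_σ) belong to \hat{P}; (ii) T(σ) = T(σ') for every Clausius–Duhem temperature scale T ∈ T_CD. -/

import Mathlib

open Set

noncomputable section

/-- Signed regular Borel measures on `X`, modeled via the Riesz representation
theorem as the weak-star dual of `C(X, ℝ)`. -/
abbrev Meas (X : Type*) [TopologicalSpace X] := WeakDual ℝ C(X, ℝ)

/-- The ambient space containing `V(X) = M°(X) ⊕ M(X)`; membership in the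
subspace `M°(X)` of the first component is expressed by `p.1 1 = 0`. -/
abbrev VSp (X : Type*) [TopologicalSpace X] := Meas X × Meas X

/-- The cone of nonnegative measures. -/
def PosMeas (X : Type*) [TopologicalSpace X] : Set (Meas X) :=
  {μ | ∀ f : C(X, ℝ), (∀ x, 0 ≤ f x) → 0 ≤ μ f}

variable {X : Type*} [TopologicalSpace X]

/-- The Dirac measure at a point, i.e. the evaluation functional. -/
def dirac (x : X) : Meas X :=
  (⟨⟨⟨fun f => f x, fun _ _ => rfl⟩, fun _ _ => rfl⟩,
    continuous_eval_const x⟩ : C(X, ℝ) →L[ℝ] ℝ)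

/-- The set of nonnegative multiples of members of `P`. -/
def coneOf (P : Set (VSp X)) : Set (VSp X) :=
  {x | ∃ c : ℝ, 0 ≤ c ∧ ∃ p ∈ P, x = c • p}

/-- `\hat P`, the weak-star closure of the cone generated by `P`. -/
def hatP (P : Set (VSp X)) : Set (VSp X) :=
  closure (coneOf P)

/-- A thermodynamical theory: processes have change of condition with total mass
zero (i.e. `P ⊆ V(X)`), and `\hat P` is convex. -/
def IsThermoTheory (P : Set (VSp X)) : Prop :=
  (∀ p ∈ P, p.1 (1 : C(X, ℝ)) = 0) ∧ Convex ℝ (hatP P)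

/-- A Kelvin–Planck theory: a thermodynamical theory with
`\hat P ∩ ({0} × M₊(X)) = {(0,0)}`. -/
def IsKelvinPlanck (P : Set (VSp X)) : Prop :=
  IsThermoTheory P ∧ hatP P ∩ (({0} : Set (Meas X)) ×ˢ PosMeas X) = {(0, 0)}

/-- A Clausius–Duhem pair `(η, T)` for the theory `P`: `η` and `T` are continuous,
`T` is strictly positive, and for every continuous `β` equal pointwise to `1/T`
(such a `β` exists, and is unique, by positivity of `T`), the Clausius–Duhem
inequality `∫ η d(Δm) ≥ ∫ (1/T) dq` holds for every process in `P`. -/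
def IsCDPair (P : Set (VSp X)) (η T : C(X, ℝ)) : Prop :=
  (∀ x, 0 < T x) ∧
    ∀ β : C(X, ℝ), (∀ x, β x = (T x)⁻¹) → ∀ p ∈ P, p.2 β ≤ p.1 η

/-- A Clausius–Duhem temperature scale. -/
def IsCDTemp (P : Set (VSp X)) (T : C(X, ℝ)) : Prop :=
  ∃ η : C(X, ℝ), IsCDPair P η T

/-- Two states are of the same hotness: both `(0, δ_a − δ_b)` and `(0, δ_b − δ_a)`
belong to `\hat P`. -/
def SameHotness (P : Set (VSp X)) (a b : X) : Prop :=
  ((0 : Meas X), dirac a - dirac b) ∈ hatP P ∧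
    ((0 : Meas X), dirac b - dirac a) ∈ hatP P

/-- The hotness level of a state. -/
def hotnessLevel (P : Set (VSp X)) (a : X) : Set X :=
  {b | SameHotness P a b}

/-- A subset of the state space that is a hotness level. -/
def IsHotnessLevel (P : Set (VSp X)) (h : Set X) : Prop :=
  ∃ a : X, h = hotnessLevel P a

/-- The (signed) measure `μ` is supported in the set `A`: `μ` annihilates every
continuous function vanishing on `A`. -/
def SuppIn (μ : Meas X) (A : Set X) : Prop :=
  ∀ f : C(X, ℝ), (∀ x ∈ A, f x = 0) → μ f = 0

/-- `\hat Q` contains a passive heat transfer from hotness level `h` to `h'`: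
an element `(0, μ − μ')` of `\hat Q` with `μ, μ'` nonnegative, `supp μ ⊆ h`,
`supp μ' ⊆ h'` and `μ(h) = μ'(h') > 0` (the common value being the total mass). -/
def IsPassiveHT (Q : Set (VSp X)) (h h' : Set X) : Prop :=
  ∃ μ μ' : Meas X, μ ∈ PosMeas X ∧ μ' ∈ PosMeas X ∧ SuppIn μ h ∧ SuppIn μ' h' ∧
    μ (1 : C(X, ℝ)) = μ' (1 : C(X, ℝ)) ∧ 0 < μ (1 : C(X, ℝ)) ∧
    ((0 : Meas X), μ - μ') ∈ hatP Q

/-- Hotness level `h'` is hotter than `h`: the levels are distinct and every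
thermodynamical theory whose closed process cone contains `P` together with a
passive heat transfer from `h` to `h'` fails to be a Kelvin–Planck theory. -/
def Hotter (P : Set (VSp X)) (h' h : Set X) : Prop :=
  h' ≠ h ∧ ∀ Pd : Set (VSp X), IsThermoTheory Pd → P ⊆ hatP Pd →
    IsPassiveHT Pd h h' → ¬ IsKelvinPlanck Pd

/-- State `a` is hotter than state `b`. -/
def HotterState (P : Set (VSp X)) (a b : X) : Prop :=
  Hotter P (hotnessLevel P a) (hotnessLevel P b)

/-- A Carnot element of the theory `P` operating between hotness levels `h'` and
`h`: a reversible cyclic element `(0, μ' − μ)` with `μ', μ` nonzero nonnegative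
measures supported in `h'`, `h` respectively. -/
def IsCarnotBetween (P : Set (VSp X)) (h' h : Set X) (p : VSp X) : Prop :=
  p ∈ hatP P ∧ -p ∈ hatP P ∧
    ∃ μ' μ : Meas X, μ' ∈ PosMeas X ∧ μ ∈ PosMeas X ∧ μ' ≠ 0 ∧ μ ≠ 0 ∧
      SuppIn μ' h' ∧ SuppIn μ h ∧ p = ((0 : Meas X), μ' - μ)

end

/-!
A Clausius–Duhem pair `(η, T)` is exactly a continuous linear functional `p ↦ p.1 η - p.2 (1/T)`
that is nonnegative on the closed cone `\hat P`; applied to `(0, ±(δ_a - δ_b))` it forces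
`1/T(a) = 1/T(b)`. Conversely, if `(0, δ_a - δ_b) ∉ \hat P`, Farkas' lemma separates it from
`\hat P` by such a functional with `β = 1/T` satisfying `β(a) > β(b)`, but with no sign control
on `β`. The Kelvin–Planck property makes `\hat P` disjoint from the weak-star compact set of
probability measures (placed in the second component), and separating that set gives a strictly
positive `β₀`. On the compact space `X`, `β₀ + ε β₁` is still positive for small `ε > 0`, and
either `β₀` or this combination takes different values at `a` and `b`.
-/

open Set

noncomputable section

instance WeakDual.instLocallyConvexSpace {E : Type*} [AddCommGroup E] [Module ℝ E]
    [TopologicalSpace E] : LocallyConvexSpace ℝ (WeakDual ℝ E) :=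
  WeakBilin.locallyConvexSpace

variable {X : Type*} [TopologicalSpace X]

theorem Meas.exists_eq_apply (L : Meas X →L[ℝ] ℝ) : ∃ g : C(X, ℝ), ∀ μ : Meas X, L μ = μ g := by
  obtain ⟨g, rfl⟩ := LinearMap.dualEmbedding_surjective (topDualPairing ℝ C(X, ℝ)) L
  exact ⟨g, fun _ => rfl⟩

theorem VSp.exists_eq_apply (L : VSp X →L[ℝ] ℝ) :
    ∃ g h : C(X, ℝ), ∀ p : VSp X, L p = p.1 g + p.2 h := by
  obtain ⟨g, hg⟩ := Meas.exists_eq_apply (L.comp (.inl ℝ (Meas X) (Meas X)))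
  obtain ⟨h, hh⟩ := Meas.exists_eq_apply (L.comp (.inr ℝ (Meas X) (Meas X)))
  refine ⟨g, h, fun p => ?_⟩
  rw [← hg, ← hh, ← Prod.fst_add_snd p, map_add]
  simp

section Cone

variable {P : Set (VSp X)}

theorem subset_hatP : P ⊆ hatP P :=
  fun p hp => subset_closure ⟨1, zero_le_one, p, hp, (one_smul ℝ p).symm⟩

theorem smul_mem_coneOf {c : ℝ} (hc : 0 ≤ c) {p : VSp X} (hp : p ∈ coneOf P) :
    c • p ∈ coneOf P := by
  obtain ⟨d, hd, q, hq, rfl⟩ := hp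
  exact ⟨c * d, mul_nonneg hc hd, q, hq, (mul_smul c d q).symm⟩

theorem smul_mem_hatP {c : ℝ} (hc : 0 ≤ c) {p : VSp X} (hp : p ∈ hatP P) : c • p ∈ hatP P :=
  closure_mono (smul_set_subset_iff.2 fun _ hq => smul_mem_coneOf hc hq)
    (smul_closure_subset c _ (smul_mem_smul_set hp))

def hatPCone (hconv : Convex ℝ (hatP P)) (h0 : (0 : VSp X) ∈ hatP P) : ProperCone ℝ (VSp X) where
  carrier := hatP P
  add_mem' {p q} hp hq := by
    have hmid := hconv hp hq (by norm_num : (0 : ℝ) ≤ 1 / 2) (by norm_num : (0 : ℝ) ≤ 1 / 2)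
      (by norm_num)
    simpa [← smul_add, smul_smul] using smul_mem_hatP (by norm_num : (0 : ℝ) ≤ 2) hmid
  zero_mem' := h0
  smul_mem' c _ hp := smul_mem_hatP c.2 hp
  isClosed' := isClosed_closure

end Cone

/-- The Clausius–Duhem inequality on `Q`, with `β` standing for `1/T`. -/
def CDIneq (Q : Set (VSp X)) (β η : C(X, ℝ)) : Prop :=
  ∀ p ∈ Q, p.2 β ≤ p.1 η

section CDIneq

variable {P : Set (VSp X)} {β η β' η' : C(X, ℝ)}

theorem CDIneq.hatP (h : CDIneq P β η) : CDIneq (hatP P) β η := by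
  have hclosed : IsClosed {p : VSp X | p.2 β ≤ p.1 η} :=
    isClosed_le ((WeakDual.eval_continuous β).comp continuous_snd)
      ((WeakDual.eval_continuous η).comp continuous_fst)
  refine fun p hp => closure_minimal ?_ hclosed hp
  rintro _ ⟨c, hc, q, hq, rfl⟩
  exact mul_le_mul_of_nonneg_left (h q hq) hc

theorem CDIneq.add_smul (h : CDIneq P β η) (h' : CDIneq P β' η') {c : ℝ} (hc : 0 ≤ c) :
    CDIneq P (β + c • β') (η + c • η') := by
  intro p hp
  simpa only [map_add, map_smul, smul_eq_mul] using
    add_le_add (h p hp) (mul_le_mul_of_nonneg_left (h' p hp) hc)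

end CDIneq

theorem isClosed_posMeas : IsClosed (PosMeas X) := by
  simp only [PosMeas, ofPred_forall]
  exact isClosed_iInter fun f => isClosed_iInter fun _ =>
    isClosed_le continuous_const (WeakDual.eval_continuous f)

theorem abs_apply_le_of_mem_posMeas [CompactSpace X] {μ : Meas X} (hμ : μ ∈ PosMeas X)
    (f : C(X, ℝ)) : |μ f| ≤ ‖f‖ * μ 1 := by
  have hf : ∀ x, |f x| ≤ ‖f‖ := fun x => by simpa using f.norm_coe_le_norm x
  have hupper := hμ (‖f‖ • 1 - f) fun x => by simpa using (abs_le.1 (hf x)).2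
  have hlower := hμ (‖f‖ • 1 + f) fun x => by
    simpa [neg_le_iff_add_nonneg'] using (abs_le.1 (hf x)).1
  simp only [map_sub, map_add, map_smul, smul_eq_mul] at hupper hlower
  exact abs_le.2 ⟨by linarith, by linarith⟩

def probMeas (X : Type*) [TopologicalSpace X] : Set (Meas X) :=
  {μ | μ ∈ PosMeas X ∧ μ 1 = 1}

theorem dirac_mem_probMeas (x : X) : dirac x ∈ probMeas X :=
  ⟨fun _ hf => hf x, rfl⟩

theorem convex_probMeas : Convex ℝ (probMeas X) := by
  rintro μ ⟨hμ, hμ1⟩ ν ⟨hν, hν1⟩ s t hs ht hst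
  refine ⟨fun f hf => ?_, ?_⟩
  · have := hμ f hf
    have := hν f hf
    show 0 ≤ s * μ f + t * ν f
    positivity
  · show s * μ 1 + t * ν 1 = 1
    rw [hμ1, hν1, mul_one, mul_one, hst]

theorem isCompact_probMeas [CompactSpace X] : IsCompact (probMeas X) := by
  refine (WeakDual.isCompact_polar ℝ (Metric.closedBall_mem_nhds (0 : C(X, ℝ)) one_pos))
    |>.of_isClosed_subset
      (isClosed_posMeas.inter (isClosed_eq (WeakDual.eval_continuous 1) continuous_const)) ?_
  rintro μ ⟨hμ, hμ1⟩ f hf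
  have hbound := abs_apply_le_of_mem_posMeas hμ f
  rw [hμ1, mul_one] at hbound
  exact hbound.trans (mem_closedBall_zero_iff.1 hf)

namespace IsKelvinPlanck

variable {P : Set (VSp X)}

theorem zero_mem_hatP (hP : IsKelvinPlanck P) : (0 : VSp X) ∈ hatP P :=
  (hP.2.symm.subset rfl).1

theorem disjoint_probMeas_hatP (hP : IsKelvinPlanck P) :
    Disjoint (({0} : Set (Meas X)) ×ˢ probMeas X) (hatP P) := by
  refine disjoint_left.2 fun p ⟨hp0, hpS⟩ hpP => ?_
  have hp : p = (0, 0) := hP.2.subset ⟨hpP, hp0, hpS.1⟩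
  exact zero_ne_one (hp ▸ hpS.2)

/-- Hahn–Banach separation from the closed convex cone `hatP P`; the separating functional is
`p ↦ p.1 η - p.2 β`. -/
theorem exists_cdIneq_of_disjoint (hP : IsKelvinPlanck P) {K : Set (VSp X)}
    (hKconv : Convex ℝ K) (hKcomp : IsCompact K) (hK : Disjoint K (hatP P)) :
    ∃ β η : C(X, ℝ), CDIneq (hatP P) β η ∧ ∀ k ∈ K, k.1 η < k.2 β := by
  obtain ⟨f, hfP, hfK⟩ :=
    (hatPCone hP.1.2 hP.zero_mem_hatP).hyperplane_separation hKconv hKcomp hK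
  obtain ⟨η, h, hf⟩ := VSp.exists_eq_apply f
  refine ⟨-h, η, fun p hp => ?_, fun k hk => ?_⟩
  · have := hfP p hp
    rw [hf] at this
    simp only [map_neg]
    linarith
  · have := hfK k hk
    rw [hf] at this
    simp only [map_neg]
    linarith

theorem exists_pos_cdIneq [CompactSpace X] (hP : IsKelvinPlanck P) :
    ∃ β η : C(X, ℝ), (∀ x, 0 < β x) ∧ CDIneq (hatP P) β η := by
  obtain ⟨β, η, hCD, hK⟩ := hP.exists_cdIneq_of_disjoint
    ((convex_singleton 0).prod convex_probMeas) (isCompact_singleton.prod isCompact_probMeas)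
    hP.disjoint_probMeas_hatP
  exact ⟨β, η, fun x => hK (0, dirac x) ⟨rfl, dirac_mem_probMeas x⟩, hCD⟩

theorem exists_cdIneq_lt (hP : IsKelvinPlanck P) {a b : X}
    (hab : ((0 : Meas X), dirac a - dirac b) ∉ hatP P) :
    ∃ β η : C(X, ℝ), CDIneq (hatP P) β η ∧ β b < β a := by
  obtain ⟨β, η, hCD, hK⟩ := hP.exists_cdIneq_of_disjoint (convex_singleton _)
    isCompact_singleton (disjoint_singleton_left.2 hab)
  have hlt : 0 < β a - β b := hK _ rfl
  exact ⟨β, η, hCD, sub_pos.1 hlt⟩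

end IsKelvinPlanck

theorem exists_pos_forall_add_mul_pos [CompactSpace X] {f : C(X, ℝ)} (hf : ∀ x, 0 < f x)
    (g : C(X, ℝ)) : ∃ ε > 0, ∀ x, 0 < f x + ε * g x := by
  rcases isEmpty_or_nonempty X with hX | hX
  · exact ⟨1, one_pos, isEmptyElim⟩
  obtain ⟨x₀, -, hmin⟩ := isCompact_univ.exists_isMinOn univ_nonempty f.continuous.continuousOn
  have hm := hf x₀
  refine ⟨f x₀ / (‖g‖ + 1), by positivity, fun x => ?_⟩
  have hfx : f x₀ ≤ f x := hmin (mem_univ x)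
  have hgx : -‖g‖ ≤ g x := neg_le_of_abs_le (by simpa using g.norm_coe_le_norm x)
  have hε : f x₀ / (‖g‖ + 1) * ‖g‖ < f x₀ := by
    rw [div_mul_eq_mul_div, div_lt_iff₀ (by positivity)]
    nlinarith
  nlinarith [mul_le_mul_of_nonneg_left hgx (by positivity : 0 ≤ f x₀ / (‖g‖ + 1))]

def recip (β : C(X, ℝ)) (hβ : ∀ x, β x ≠ 0) : C(X, ℝ) :=
  ⟨fun x => (β x)⁻¹, β.continuous.inv₀ hβ⟩

section Temperature

variable {P : Set (VSp X)}

theorem isCDTemp_recip {β η : C(X, ℝ)} (hβ : ∀ x, 0 < β x) (hCD : CDIneq P β η) :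
    IsCDTemp P (recip β fun x => (hβ x).ne') := by
  refine ⟨η, fun x => inv_pos.2 (hβ x), fun β' hβ' => ?_⟩
  obtain rfl : β' = β := ContinuousMap.ext fun x => by simp [hβ', recip]
  exact hCD

theorem IsCDPair.cdIneq_recip {η T : C(X, ℝ)} (h : IsCDPair P η T) :
    CDIneq P (recip T fun x => (h.1 x).ne') η :=
  h.2 _ fun _ => rfl

theorem SameHotness.apply_eq {a b : X} (h : SameHotness P a b) {β η : C(X, ℝ)}
    (hCD : CDIneq P β η) : β a = β b := by
  have hab : β a - β b ≤ 0 := hCD.hatP _ h.1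
  have hba : β b - β a ≤ 0 := hCD.hatP _ h.2
  linarith

theorem IsKelvinPlanck.exists_isCDTemp_ne [CompactSpace X] (hP : IsKelvinPlanck P) {a b : X}
    (hab : ((0 : Meas X), dirac a - dirac b) ∉ hatP P) :
    ∃ T : C(X, ℝ), IsCDTemp P T ∧ T a ≠ T b := by
  obtain ⟨β₀, η₀, hpos₀, hCD₀⟩ := hP.exists_pos_cdIneq
  obtain ⟨β₁, η₁, hCD₁, hlt₁⟩ := hP.exists_cdIneq_lt hab
  -- `β₀` is positive, `β₁` separates `a` from `b`; a small positive combination does both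
  obtain ⟨β, η, hpos, hCD, hne⟩ : ∃ β η : C(X, ℝ), (∀ x, 0 < β x) ∧ CDIneq (hatP P) β η ∧
      β a ≠ β b := by
    by_cases h₀ : β₀ a = β₀ b
    · obtain ⟨ε, hε, hposε⟩ := exists_pos_forall_add_mul_pos hpos₀ β₁
      refine ⟨β₀ + ε • β₁, η₀ + ε • η₁, hposε, hCD₀.add_smul hCD₁ hε.le, ?_⟩
      simp only [ContinuousMap.add_apply, ContinuousMap.smul_apply, smul_eq_mul, h₀]
      exact fun h => (mul_lt_mul_of_pos_left hlt₁ hε).ne (add_left_cancel h).symm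
    · exact ⟨β₀, η₀, hpos₀, hCD₀, h₀⟩
  refine ⟨_, isCDTemp_recip hpos fun p hp => hCD p (subset_hatP hp), fun h => hne ?_⟩
  exact inv_injective h

end Temperature

end

theorem same_hotness_iff_equal_temperature_general
    {X : Type*} [TopologicalSpace X] [CompactSpace X]
    (P : Set (VSp X)) (hP : IsKelvinPlanck P) (a b : X) :
    SameHotness P a b ↔ ∀ T : C(X, ℝ), IsCDTemp P T → T a = T b := by
  constructor
  · rintro hab T ⟨η, hT⟩
    exact inv_injective (hab.apply_eq hT.cdIneq_recip)
  · intro hT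
    by_contra hab
    rcases not_and_or.1 hab with hab | hba
    · obtain ⟨T, hTcd, hne⟩ := hP.exists_isCDTemp_ne hab
      exact hne (hT T hTcd)
    · obtain ⟨T, hTcd, hne⟩ := hP.exists_isCDTemp_ne hba
      exact hne (hT T hTcd).symm

/-- **Theorem.** For states `a`, `b` of a Kelvin–Planck theory `(X, P)` the following
are equivalent: (i) `a` and `b` are of the same hotness; (ii) `T a = T b` for every
Clausius–Duhem temperature scale `T`. -/
theorem same_hotness_iff_equal_temperature
    {X : Type*} [TopologicalSpace X] [CompactSpace X] [T2Space X]
    (P : Set (VSp X)) (hP : IsKelvinPlanck P) (a b : X) :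
    SameHotness P a b ↔ ∀ T : C(X, ℝ), IsCDTemp P T → T a = T b :=
  same_hotness_iff_equal_temperature_general P hP a b
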